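/- arXiv:math/0307322 — 7 statements merged into one kernel-verified Lean document; each statement's English description precedes it below -/
import Mathlib

section
/- Nitaj's triple A = 13·19^6, B = 2^30·5, C = 3^13·11^2·31 satisfies A + B = C, the three numbers are pairwise coprime, and the Szpiro quotient ρ = log(ABC)/log(rad(ABC)) satisfies ρ > 4.41. -/
/-- The radical of a positive integer: the product of its distinct prime factors. -/
def radical (n : ℕ) : ℕ := ∏ p ∈ n.primeFactors, p

lemma nitaj_primeFactors :
    ((13 * 19 ^ 6) * (2 ^ 30 * 5) * (3 ^ 13 * 11 ^ 2 * 31) : ℕ).primeFactors =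
      {2, 3, 5, 11, 13, 19, 31} := by
  rw [Nat.primeFactors_mul (by norm_num) (by norm_num),
      Nat.primeFactors_mul (by norm_num) (by norm_num),
      Nat.primeFactors_mul (by norm_num) (by norm_num),
      Nat.primeFactors_mul (by norm_num) (by norm_num),
      Nat.primeFactors_mul (by norm_num) (by norm_num),
      Nat.primeFactors_mul (by norm_num) (by norm_num),
      Nat.primeFactors_pow _ (by norm_num),
      Nat.primeFactors_pow _ (by norm_num),
      Nat.primeFactors_pow _ (by norm_num),
      Nat.primeFactors_pow _ (by norm_num),
      Nat.Prime.primeFactors (by norm_num),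
      Nat.Prime.primeFactors (by norm_num),
      Nat.Prime.primeFactors (by norm_num),
      Nat.Prime.primeFactors (by norm_num),
      Nat.Prime.primeFactors (by norm_num),
      Nat.Prime.primeFactors (by norm_num),
      Nat.Prime.primeFactors (by norm_num)]
  decide

lemma nitaj_radical :
    radical ((13 * 19 ^ 6) * (2 ^ 30 * 5) * (3 ^ 13 * 11 ^ 2 * 31)) = 2526810 := by
  rw [radical, nitaj_primeFactors]
  decide

lemma nitaj_key :
    (4.41 : ℝ) < Real.log ((19636234404674681965935329280 : ℕ) : ℝ) /
      Real.log ((2526810 : ℕ) : ℝ) := by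
  have hrpos : (0 : ℝ) < Real.log ((2526810 : ℕ) : ℝ) := by
    apply Real.log_pos; norm_num
  rw [lt_div_iff₀ hrpos]
  have keyN : (2526810 : ℕ) ^ 441 < (19636234404674681965935329280 : ℕ) ^ 100 := by
    decide
  have hlog : Real.log ((((2526810 : ℕ) ^ 441 : ℕ)) : ℝ) <
      Real.log ((((19636234404674681965935329280 : ℕ) ^ 100 : ℕ)) : ℝ) :=
    Real.log_lt_log (by positivity) (by exact_mod_cast keyN)
  rw [Nat.cast_pow, Nat.cast_pow, Real.log_pow, Real.log_pow] at hlog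
  set_option maxRecDepth 4000 in push_cast at hlog
  linarith

/-- Nitaj's triple A = 13·19^6, B = 2^30·5, C = 3^13·11^2·31: it satisfies
A + B = C, is pairwise coprime, and has Szpiro quotient greater than 4.41. -/
theorem nitaj_szpiro :
    (13 * 19 ^ 6 : ℕ) + 2 ^ 30 * 5 = 3 ^ 13 * 11 ^ 2 * 31 ∧
    Nat.Coprime (13 * 19 ^ 6) (2 ^ 30 * 5) ∧
    Nat.Coprime (13 * 19 ^ 6) (3 ^ 13 * 11 ^ 2 * 31) ∧
    Nat.Coprime (2 ^ 30 * 5) (3 ^ 13 * 11 ^ 2 * 31) ∧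
    Real.log ((13 * 19 ^ 6 : ℕ) * (2 ^ 30 * 5) * (3 ^ 13 * 11 ^ 2 * 31) : ℝ) /
      Real.log (radical ((13 * 19 ^ 6) * (2 ^ 30 * 5) * (3 ^ 13 * 11 ^ 2 * 31)) : ℝ)
      > 4.41 := by
  refine ⟨by norm_num, by decide, by decide, by decide, ?_⟩
  rw [nitaj_radical]
  have hx : ((13 * 19 ^ 6 : ℕ) * (2 ^ 30 * 5) * (3 ^ 13 * 11 ^ 2 * 31) : ℝ) =
      ((19636234404674681965935329280 : ℕ) : ℝ) := by norm_num
  rw [hx]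
  exact nitaj_key
end

section
/- If r1, r2, r3 are the three complex roots of x^3 - 2x^2 + 4x - 4 = 0, then (r3 - r2)·r1^52 + (r1 - r3)·r2^52 + (r2 - r1)·r3^52 = 0. -/
lemma root_pow52 (r : ℂ) (hr : r ^ 3 - 2 * r ^ 2 + 4 * r - 4 = 0) :
    r ^ 52 = 2731599200256 * r - 3539053051904 := by
  linear_combination ((-884763262976 : ℂ) + (-201863462912 : ℂ) * r + (240518168576 : ℂ) * r ^ 2 + (120259084288 : ℂ) * r ^ 3 + (-50465865728 : ℂ) * r ^ 4 + (-50465865728 : ℂ) * r ^ 5 + (4831838208 : ℂ) * r ^ 6 + (17448304640 : ℂ) * r ^ 7 + (2415919104 : ℂ) * r ^ 8 + (-5100273664 : ℂ) * r ^ 9 + (-1946157056 : ℂ) * r ^ 10 + (1207959552 : ℂ) * r ^ 11 + (905969664 : ℂ) * r ^ 12 + (-184549376 : ℂ) * r ^ 13 + (-335544320 : ℂ) * r ^ 14 + (-16777216 : ℂ) * r ^ 15 + (104857600 : ℂ) * r ^ 16 + (29360128 : ℂ) * r ^ 17 + (-27262976 : ℂ) * r ^ 18 + (-15728640 : ℂ)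 * r ^ 19 + (5242880 : ℂ) * r ^ 20 + (6291456 : ℂ) * r ^ 21 + (-262144 : ℂ) * r ^ 22 + (-2097152 : ℂ) * r ^ 23 + (-393216 : ℂ) * r ^ 24 + (589824 : ℂ) * r ^ 25 + (262144 : ℂ) * r ^ 26 + (-131072 : ℂ) * r ^ 27 + (-114688 : ℂ) * r ^ 28 + (16384 : ℂ) * r ^ 29 + (40960 : ℂ) * r ^ 30 + (4096 : ℂ) * r ^ 31 + (-12288 : ℂ) * r ^ 32 + (-4096 : ℂ) * r ^ 33 + (3072 : ℂ) * r ^ 34 + (2048 : ℂ) * r ^ 35 + (-512 : ℂ) * r ^ 36 + (-768 : ℂ) * r ^ 37 + (256 : ℂ) * r ^ 39 + (64 : ℂ) * r ^ 40 + (-64 : ℂ) * r ^ 41 + (-32 : ℂ) * r ^ 42 + (16 : ℂ) * r ^ 43 + (16 : ℂ) * r ^ 44 + (-4 : ℂ) * r ^ 46 + (2 : ℂ) * r ^ 48 + (1 : ℂ) * r ^ 49) * hr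

/-- de Weger's algebraic identity: if r1, r2, r3 are the roots (with
multiplicity) of x^3 - 2x^2 + 4x - 4, then
(r3-r2)·r1^52 + (r1-r3)·r2^52 + (r2-r1)·r3^52 = 0. -/
theorem deWeger_identity (r1 r2 r3 : ℂ)
    (h : ∀ x : ℂ, x ^ 3 - 2 * x ^ 2 + 4 * x - 4 = (x - r1) * (x - r2) * (x - r3)) :
    (r3 - r2) * r1 ^ 52 + (r1 - r3) * r2 ^ 52 + (r2 - r1) * r3 ^ 52 = 0 := by
  have h1 : r1 ^ 3 - 2 * r1 ^ 2 + 4 * r1 - 4 = 0 := by rw [h r1]; ring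
  have h2 : r2 ^ 3 - 2 * r2 ^ 2 + 4 * r2 - 4 = 0 := by rw [h r2]; ring
  have h3 : r3 ^ 3 - 2 * r3 ^ 2 + 4 * r3 - 4 = 0 := by rw [h r3]; ring
  rw [root_pow52 r1 h1, root_pow52 r2 h2, root_pow52 r3 h3]
  ring
end

section
/- For the triple A = 71^8·233^3, B = 2^5·5^18·7^3·17^3·981439, C = 3^38·13^4·5233, the power P = log(C)/log(rad(ABC)) satisfies P > 1.41. -/
lemma rad_eq : radical ((71 ^ 8 * 233 ^ 3) * (2 ^ 5 * 5 ^ 18 * 7 ^ 3 * 17 ^ 3 * 981439)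
    * (3 ^ 38 * 13 ^ 4 * 5233)) = 3943119007145400810 := by
  have hN : (71 ^ 8 * 233 ^ 3) * (2 ^ 5 * 5 ^ 18 * 7 ^ 3 * 17 ^ 3 * 981439)
      * (3 ^ 38 * 13 ^ 4 * 5233)
      = 2 ^ 5 * (3 ^ 38 * (5 ^ 18 * (7 ^ 3 * (13 ^ 4 * (17 ^ 3
        * (71 ^ 8 * (233 ^ 3 * (5233 * 981439)))))))) := by norm_num
  have h2 : Nat.Prime 2 := by norm_num
  have h3 : Nat.Prime 3 := by norm_num
  have h5 : Nat.Prime 5 := by norm_num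
  have h7 : Nat.Prime 7 := by norm_num
  have h13 : Nat.Prime 13 := by norm_num
  have h17 : Nat.Prime 17 := by norm_num
  have h71 : Nat.Prime 71 := by norm_num
  have h233 : Nat.Prime 233 := by norm_num
  have h5233 : Nat.Prime 5233 := by norm_num
  have h981439 : Nat.Prime 981439 := by norm_num
  unfold radical
  rw [hN]
  rw [Nat.primeFactors_mul (by positivity) (by positivity),
      Nat.primeFactors_mul (by positivity) (by positivity),
      Nat.primeFactors_mul (by positivity) (by positivity),
      Nat.primeFactors_mul (by positivity) (by positivity),
      Nat.primeFactors_mul (by positivity) (by positivity),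
      Nat.primeFactors_mul (by positivity) (by positivity),
      Nat.primeFactors_mul (by positivity) (by positivity),
      Nat.primeFactors_mul (by positivity) (by positivity),
      Nat.primeFactors_mul (by positivity) (by positivity)]
  rw [Nat.primeFactors_pow _ (by norm_num), Nat.primeFactors_pow _ (by norm_num),
      Nat.primeFactors_pow _ (by norm_num), Nat.primeFactors_pow _ (by norm_num),
      Nat.primeFactors_pow _ (by norm_num), Nat.primeFactors_pow _ (by norm_num),
      Nat.primeFactors_pow _ (by norm_num), Nat.primeFactors_pow _ (by norm_num)]
  rw [h2.primeFactors, h3.primeFactors, h5.primeFactors, h7.primeFactors,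
      h13.primeFactors, h17.primeFactors, h71.primeFactors, h233.primeFactors,
      h5233.primeFactors, h981439.primeFactors]
  decide

/-- For the triple A = 71^8·233^3, B = 2^5·5^18·7^3·17^3·981439,
C = 3^38·13^4·5233 the power P = log C / log rad(ABC) exceeds 1.41. -/
theorem new_abc_power :
    Real.log ((3 : ℝ) ^ 38 * 13 ^ 4 * 5233) /
      Real.log (radical ((71 ^ 8 * 233 ^ 3) * (2 ^ 5 * 5 ^ 18 * 7 ^ 3 * 17 ^ 3 * 981439)
        * (3 ^ 38 * 13 ^ 4 * 5233)) : ℝ) > 1.41 := by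
  rw [rad_eq]
  push_cast
  have hRpos : (0:ℝ) < Real.log 3943119007145400810 :=
    Real.log_pos (by norm_num)
  rw [gt_iff_lt, lt_div_iff₀ hRpos]
  have key : ((3943119007145400810 : ℕ) : ℝ) ^ (141:ℕ)
      < (((3:ℕ) ^ 38 * 13 ^ 4 * 5233 : ℕ) : ℝ) ^ (100:ℕ) := by
    have : (3943119007145400810 : ℕ) ^ 141 < ((3:ℕ) ^ 38 * 13 ^ 4 * 5233) ^ 100 := by
      norm_num
    exact_mod_cast this
  have hlog := Real.log_lt_log (by positivity) key
  rw [Real.log_pow, Real.log_pow] at hlog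
  push_cast at hlog ⊢
  nlinarith [hlog]
end

section
/- Every integer vector (x, y, z) with x + 81y + 625z = 0 is an integer linear combination of v1 = (23, -8, 1) and v2 = (12, 23, -3). -/
/-- Every integer vector (x,y,z) with x + 81y + 625z = 0 is an integer linear
combination of v1 = (23, -8, 1) and v2 = (12, 23, -3). -/
theorem lattice_generated (x y z : ℤ) (h : x + 81 * y + 625 * z = 0) :
    ∃ a b : ℤ, x = a * 23 + b * 12 ∧ y = a * (-8) + b * 23 ∧ z = a * 1 + b * (-3) := by
  exact ⟨-3*y - 23*z, -y - 8*z, by linarith, by ring, by ring⟩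
end

section
/- With w = (3+√13)/2, the generalized ABC power of the triple (w^{-5}(w-1), w^5(w-2), 512) over K = ℚ(√13), namely P = 2·log(512)/(log 13 + log 3 + log 3 + log 4), satisfies P > 2.029. -/
set_option maxRecDepth 100000

/-- The generalized ABC power of the triple (w^{-5}(w-1), w^5(w-2), 512) over
ℚ(√13), namely 2·log 512/(log 13 + log 3 + log 3 + log 4), exceeds 2.029. -/
theorem algebraic_abc_power :
    2 * Real.log 512 / (Real.log 13 + Real.log 3 + Real.log 3 + Real.log 4)
      > 2.029 := by
  have h468 : Real.log 13 + Real.log 3 + Real.log 3 + Real.log 4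
      = Real.log 468 := by
    rw [← Real.log_mul (by norm_num) (by norm_num),
        ← Real.log_mul (by norm_num) (by norm_num),
        ← Real.log_mul (by norm_num) (by norm_num)]
    norm_num
  rw [h468]
  have hpos : (0:ℝ) < Real.log 468 := Real.log_pos (by norm_num)
  rw [gt_iff_lt, lt_div_iff₀ hpos]
  have hnat : (468:ℕ)^2029 < 512^2000 := by decide
  have hR : ((468:ℕ):ℝ)^(2029:ℕ) < ((512:ℕ):ℝ)^(2000:ℕ) := by
    rw [← Nat.cast_pow, ← Nat.cast_pow]
    exact Nat.cast_lt.mpr hnat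
  have hR' : (468:ℝ)^(2029:ℕ) < (512:ℝ)^(2000:ℕ) := by
    exact_mod_cast hR
  have hlog : Real.log ((468:ℝ)^(2029:ℕ)) < Real.log ((512:ℝ)^(2000:ℕ)) :=
    Real.log_lt_log (pow_pos (by norm_num) _) hR'
  rw [Real.log_pow, Real.log_pow] at hlog
  norm_num at hlog
  linarith
end

section
/- The triple A = 13^10·37^2, B = 3^7·19^5·71^4·223, C = 2^26·5^12·1873 satisfies A + B = C with A, B, C pairwise coprime, and its power P = log C / log(2·3·5·13·19·37·71·223·1873) satisfies P > 1.509. -/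
/-- The triple A = 13^10·37^2, B = 3^7·19^5·71^4·223, C = 2^26·5^12·1873
satisfies A + B = C, is pairwise coprime, and has power
P = log C / log(2·3·5·13·19·37·71·223·1873) > 1.509. -/
theorem new_best_abc :
    (13 ^ 10 * 37 ^ 2 : ℕ) + 3 ^ 7 * 19 ^ 5 * 71 ^ 4 * 223
      = 2 ^ 26 * 5 ^ 12 * 1873 ∧
    Nat.Coprime (13 ^ 10 * 37 ^ 2) (3 ^ 7 * 19 ^ 5 * 71 ^ 4 * 223) ∧
    Nat.Coprime (13 ^ 10 * 37 ^ 2) (2 ^ 26 * 5 ^ 12 * 1873) ∧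
    Nat.Coprime (3 ^ 7 * 19 ^ 5 * 71 ^ 4 * 223) (2 ^ 26 * 5 ^ 12 * 1873) ∧
    Real.log ((2 : ℝ) ^ 26 * 5 ^ 12 * 1873) /
      Real.log ((2 * 3 * 5 * 13 * 19 * 37 * 71 * 223 * 1873 : ℕ) : ℝ) > 1.509 := by
  refine ⟨by norm_num, by decide, by decide, by decide, ?_⟩
  have hrad : ((2 * 3 * 5 * 13 * 19 * 37 * 71 * 223 * 1873 : ℕ) : ℝ)
      = (8130568651530 : ℝ) := by norm_num
  rw [hrad]
  have hlogpos : (0 : ℝ) < Real.log 8130568651530 := by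
    apply Real.log_pos; norm_num
  rw [gt_iff_lt, lt_div_iff₀ hlogpos]
  have hN : (8130568651530 : ℕ) ^ 1509 < 30687232000000000000 ^ 1000 := by decide +kernel
  have key : ((8130568651530 : ℝ)) ^ (1509 : ℕ) < ((2:ℝ) ^ 26 * 5 ^ 12 * 1873) ^ (1000 : ℕ) := by
    calc ((8130568651530 : ℝ)) ^ (1509 : ℕ) = ((8130568651530 : ℕ) : ℝ) ^ (1509 : ℕ) := by norm_num
    _ < ((30687232000000000000 : ℕ) : ℝ) ^ (1000 : ℕ) := by exact_mod_cast hN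
    _ = ((2:ℝ) ^ 26 * 5 ^ 12 * 1873) ^ (1000 : ℕ) := by norm_num
  have hlog := Real.log_lt_log (by positivity) key
  rw [Real.log_pow, Real.log_pow] at hlog
  have h15 : (1.509 : ℝ) = 1509 / 1000 := by norm_num
  rw [h15, div_mul_eq_mul_div, div_lt_iff₀ (by norm_num : (0:ℝ) < 1000)]
  push_cast at hlog
  linarith
end

section
/- The triple A = 19^8·43^4·149^2, B = 2^15·5^23·101, C = 3^13·13·29^2·37^6·911 satisfies A + B = C with A, B, C pairwise coprime, and its Szpiro quotient ρ = log(ABC)/log(rad(ABC)) satisfies ρ > 4.23. -/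
/-- The triple A = 19^8·43^4·149^2, B = 2^15·5^23·101, C = 3^13·13·29^2·37^6·911
satisfies A + B = C, is pairwise coprime, and has Szpiro quotient
ρ = log(ABC)/log(2·3·5·13·19·29·37·43·101·149·911) > 4.23. -/
theorem new_best_szpiro :
    (19 ^ 8 * 43 ^ 4 * 149 ^ 2 : ℕ) + 2 ^ 15 * 5 ^ 23 * 101
      = 3 ^ 13 * 13 * 29 ^ 2 * 37 ^ 6 * 911 ∧
    Nat.Coprime (19 ^ 8 * 43 ^ 4 * 149 ^ 2) (2 ^ 15 * 5 ^ 23 * 101) ∧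
    Nat.Coprime (19 ^ 8 * 43 ^ 4 * 149 ^ 2) (3 ^ 13 * 13 * 29 ^ 2 * 37 ^ 6 * 911) ∧
    Nat.Coprime (2 ^ 15 * 5 ^ 23 * 101) (3 ^ 13 * 13 * 29 ^ 2 * 37 ^ 6 * 911) ∧
    Real.log (((19 ^ 8 * 43 ^ 4 * 149 ^ 2) * (2 ^ 15 * 5 ^ 23 * 101)
        * (3 ^ 13 * 13 * 29 ^ 2 * 37 ^ 6 * 911) : ℕ) : ℝ) /
      Real.log ((2 * 3 * 5 * 13 * 19 * 29 * 37 * 43 * 101 * 149 * 911 : ℕ) : ℝ)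
      > 4.23 := by
  refine ⟨by norm_num, by norm_num, by norm_num, by norm_num, ?_⟩
  have hR : (1 : ℝ) < ((2 * 3 * 5 * 13 * 19 * 29 * 37 * 43 * 101 * 149 * 911 : ℕ) : ℝ) := by
    norm_num
  have hlogR : 0 < Real.log ((2 * 3 * 5 * 13 * 19 * 29 * 37 * 43 * 101 * 149 * 911 : ℕ) : ℝ) :=
    Real.log_pos hR
  rw [gt_iff_lt, lt_div_iff₀ hlogR]
  have key : ((2 * 3 * 5 * 13 * 19 * 29 * 37 * 43 * 101 * 149 * 911 : ℕ) : ℝ) ^ 423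
      < ((19 ^ 8 * 43 ^ 4 * 149 ^ 2 * (2 ^ 15 * 5 ^ 23 * 101)
        * (3 ^ 13 * 13 * 29 ^ 2 * 37 ^ 6 * 911) : ℕ) : ℝ) ^ 100 := by
    have h : (2 * 3 * 5 * 13 * 19 * 29 * 37 * 43 * 101 * 149 * 911 : ℕ) ^ 423
        < (19 ^ 8 * 43 ^ 4 * 149 ^ 2 * (2 ^ 15 * 5 ^ 23 * 101)
          * (3 ^ 13 * 13 * 29 ^ 2 * 37 ^ 6 * 911) : ℕ) ^ 100 := by decide
    exact_mod_cast h
  have h1 := Real.log_lt_log (by positivity) key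
  rw [Real.log_pow, Real.log_pow] at h1
  push_cast at h1
  linarith
end
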